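/- Let Z be a sequence (in n) of n×m_n real random matrices and U a sequence of n×(p_n+k+1) real random matrices on a common probability space, with k fixed, p = p_n → ∞, m = m_n ≥ p+k+1 and m/p bounded above and away from zero, all entries satisfying E(z_il⁴) ≤ K and E(u_il⁴) ≤ K, and Δ_{ZᵀZ} + Δ_{ZᵀU} = O(n) as n → ∞. Let M̂ = ZᵀZ/n, M = E(M̂), Ĵ = ZᵀU/n, J = E(Ĵ). If p²/n → 0, then ‖M̂ − M‖ = O_p(p/√n) and ‖Ĵ − J‖ = O_p(p/√n) in spectral norm. -/

import Mathlib

open MeasureTheory ProbabilityTheory Filter Matrix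
open scoped ENNReal

noncomputable section

/-- Spectral (ℓ²-operator) norm of a real matrix. -/
def specNorm {a b : Type*} [Fintype a] [Fintype b] [DecidableEq b]
    (A : Matrix a b ℝ) : ℝ :=
  ‖LinearMap.toContinuousLinearMap (Matrix.toEuclideanLin A)‖

/-- `ξ n = O_p(a n)` : stochastic boundedness at rate `a`. -/
def IsBigOp {Ω : Type*} [MeasureSpace Ω] (ξ : ℕ → Ω → ℝ) (a : ℕ → ℝ) : Prop :=
  ∀ ε : ℝ, 0 < ε → ∃ C : ℝ, 0 < C ∧ ∃ N : ℕ, ∀ n ≥ N,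
    (ℙ {ω | C * a n < |ξ n ω|}) < ENNReal.ofReal ε

/-- Entrywise expectation of a random matrix. -/
def expMat {Ω : Type*} [MeasureSpace Ω] {a b : Type*}
    (F : Ω → Matrix a b ℝ) : Matrix a b ℝ :=
  Matrix.of fun i j => ∫ ω, F ω i j

/-! ### Auxiliary lemmas -/

section Aux

set_option linter.unusedSectionVars false

lemma aux_ENNhalf : (2:ℝ≥0∞)⁻¹ = 4⁻¹ + 4⁻¹ := by
  have h : (4:ℝ≥0∞)⁻¹ + 4⁻¹ = 2 * 4⁻¹ := by ring
  rw [h, show (4:ℝ≥0∞) = 2 * 2 by norm_num, ENNReal.mul_inv (by norm_num) (by norm_num),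
    ← mul_assoc, ENNReal.mul_inv_cancel (by norm_num) (by norm_num), one_mul]

lemma aux_specNorm_nonneg {a b : Type*} [Fintype a] [Fintype b] [DecidableEq b]
    (A : Matrix a b ℝ) : 0 ≤ specNorm A := norm_nonneg _

/-- Operator norm is bounded by the Frobenius norm (squared version). -/
lemma aux_specNorm_sq_le {ι κ : Type*} [Fintype ι] [Fintype κ] [DecidableEq κ]
    (A : Matrix ι κ ℝ) : specNorm A ^ 2 ≤ ∑ i : ι, ∑ j : κ, A i j ^ 2 := by
  set S : ℝ := ∑ i : ι, ∑ j : κ, A i j ^ 2 with hS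
  have hS0 : 0 ≤ S := Finset.sum_nonneg fun i _ => Finset.sum_nonneg fun j _ => sq_nonneg _
  have hb : specNorm A ≤ Real.sqrt S := by
    apply ContinuousLinearMap.opNorm_le_bound _ (Real.sqrt_nonneg _)
    intro x
    have hALx : ∀ i : ι, (LinearMap.toContinuousLinearMap (Matrix.toEuclideanLin A) x) i
        = ∑ j : κ, A i j * x j := by
      intro i
      simp [Matrix.toEuclideanLin_apply, Matrix.mulVec, dotProduct]
    have hnormx : ‖x‖ = Real.sqrt (∑ j : κ, x j ^ 2) := by
      rw [EuclideanSpace.norm_eq]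
      congr 1
      exact Finset.sum_congr rfl fun j _ => by rw [Real.norm_eq_abs, sq_abs]
    have hnormAx : ‖LinearMap.toContinuousLinearMap (Matrix.toEuclideanLin A) x‖
        = Real.sqrt (∑ i : ι, (∑ j : κ, A i j * x j) ^ 2) := by
      rw [EuclideanSpace.norm_eq]
      congr 1
      exact Finset.sum_congr rfl fun i _ => by rw [Real.norm_eq_abs, sq_abs, hALx]
    rw [hnormAx, hnormx, ← Real.sqrt_mul hS0]
    apply Real.sqrt_le_sqrt
    calc ∑ i : ι, (∑ j : κ, A i j * x j) ^ 2
        ≤ ∑ i : ι, (∑ j : κ, A i j ^ 2) * (∑ j : κ, x j ^ 2) :=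
          Finset.sum_le_sum fun i _ => Finset.sum_mul_sq_le_sq_mul_sq _ _ _
      _ = S * ∑ j : κ, x j ^ 2 := by rw [hS, ← Finset.sum_mul]
  calc specNorm A ^ 2 ≤ Real.sqrt S ^ 2 :=
        pow_le_pow_left₀ (aux_specNorm_nonneg A) hb 2
    _ = S := Real.sq_sqrt hS0

variable {Ω : Type*} [MeasureSpace Ω] [IsProbabilityMeasure (ℙ : Measure Ω)]

lemma aux_memLp_two_mul {f g : Ω → ℝ} (hf : MemLp f 4 ℙ) (hg : MemLp g 4 ℙ) :
    MemLp (fun ω => f ω * g ω) 2 ℙ := by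
  have := MemLp.smul (𝕜 := ℝ) (E := ℝ) hg hf (p := 4) (q := 4) (r := 2)
    (hpqr := ⟨by simpa [one_div] using aux_ENNhalf.symm⟩)
  simpa [smul_eq_mul, Pi.mul_def] using this

lemma aux_integrable_mul_L2 {f g : Ω → ℝ} (hf : MemLp f 2 ℙ) (hg : MemLp g 2 ℙ) :
    Integrable (fun ω => f ω * g ω) ℙ := by
  have := MemLp.smul (𝕜 := ℝ) (E := ℝ) hg hf (p := 2) (q := 2) (r := 1)
    (hpqr := ⟨by simpa [one_div] using ENNReal.inv_two_add_inv_two⟩)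
  exact memLp_one_iff_integrable.mp (by simpa [smul_eq_mul, Pi.mul_def] using this)

lemma aux_integrable_sq_L2 {f : Ω → ℝ} (hf : MemLp f 2 ℙ) :
    Integrable (fun ω => f ω ^ 2) ℙ := by
  simpa [sq] using aux_integrable_mul_L2 hf hf

/-- Cauchy–Schwarz: fourth moments bounded by `K` give second moment of the
product bounded by `K`. -/
lemma aux_sq_moment_le {K : ℝ} (hK : 0 < K) {f g : Ω → ℝ}
    (hf : MemLp f 4 ℙ) (hg : MemLp g 4 ℙ)
    (hf4 : ∫ ω, f ω ^ 4 ≤ K) (hg4 : ∫ ω, g ω ^ 4 ≤ K) :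
    ∫ ω, (f ω * g ω) ^ 2 ≤ K := by
  have hf2 : MemLp (fun ω => f ω ^ 2) (ENNReal.ofReal 2) ℙ := by
    rw [show ENNReal.ofReal 2 = (2:ℝ≥0∞) by simp]
    simpa [sq] using aux_memLp_two_mul hf hf
  have hg2 : MemLp (fun ω => g ω ^ 2) (ENNReal.ofReal 2) ℙ := by
    rw [show ENNReal.ofReal 2 = (2:ℝ≥0∞) by simp]
    simpa [sq] using aux_memLp_two_mul hg hg
  have hconj : (2:ℝ).HolderConjugate 2 := Real.HolderConjugate.two_two
  have hH := integral_mul_le_Lp_mul_Lq_of_nonneg (μ := (ℙ : Measure Ω)) hconj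
    (Eventually.of_forall fun ω => sq_nonneg (f ω))
    (Eventually.of_forall fun ω => sq_nonneg (g ω)) hf2 hg2
  have hre : ∀ h : Ω → ℝ, (fun ω => (h ω ^ 2) ^ (2:ℝ)) = fun ω => h ω ^ 4 := by
    intro h; funext ω
    rw [show (2:ℝ) = ((2:ℕ):ℝ) by norm_num, Real.rpow_natCast]
    ring
  rw [hre f, hre g] at hH
  have key : ∫ ω, f ω ^ 2 * g ω ^ 2 ≤ K := by
    refine hH.trans ?_
    have h1 : (∫ ω, f ω ^ 4) ^ ((1:ℝ)/2) ≤ K ^ ((1:ℝ)/2) :=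
      Real.rpow_le_rpow (integral_nonneg fun ω => by positivity) hf4 (by norm_num)
    have h2 : (∫ ω, g ω ^ 4) ^ ((1:ℝ)/2) ≤ K ^ ((1:ℝ)/2) :=
      Real.rpow_le_rpow (integral_nonneg fun ω => by positivity) hg4 (by norm_num)
    calc (∫ ω, f ω ^ 4) ^ ((1:ℝ)/2) * (∫ ω, g ω ^ 4) ^ ((1:ℝ)/2)
        ≤ K ^ ((1:ℝ)/2) * K ^ ((1:ℝ)/2) := by
          apply mul_le_mul h1 h2 (Real.rpow_nonneg (integral_nonneg fun ω => by positivity) _)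
            (Real.rpow_nonneg hK.le _)
      _ = K := by
          rw [← Real.rpow_add hK]; norm_num
  calc ∫ ω, (f ω * g ω) ^ 2 = ∫ ω, f ω ^ 2 * g ω ^ 2 := by
        congr 1; funext ω; ring
    _ ≤ K := key

/-- The basic variance expansion for a sum of square-integrable variables. -/
lemma aux_var_identity {n : ℕ} (f : Fin n → Ω → ℝ) (hf : ∀ i, MemLp (f i) 2 ℙ) :
    ∫ ω, (∑ i, f i ω - ∫ ω', ∑ i, f i ω') ^ 2
      = (∑ i, ∫ ω, f i ω ^ 2)
        + ((∑ i : Fin n, ∑ j ∈ Finset.univ.erase i, ∫ ω, f i ω * f j ω)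
           - (∫ ω, ∑ i, f i ω) ^ 2) := by
  have hfi : ∀ i, Integrable (f i) ℙ := fun i => (hf i).integrable (by norm_num)
  have hS2 : MemLp (fun ω => ∑ i, f i ω) 2 ℙ := by
    have := memLp_finset_sum (μ := (ℙ : Measure Ω)) Finset.univ (fun i _ => hf i)
    simpa using this
  have hS1 : Integrable (fun ω => ∑ i, f i ω) ℙ := hS2.integrable (by norm_num)
  have hSS : Integrable (fun ω => (∑ i, f i ω) ^ 2) ℙ := aux_integrable_sq_L2 hS2
  set c : ℝ := ∫ ω, ∑ i, f i ω with hc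
  have h1 : ∫ ω, (∑ i, f i ω - c) ^ 2 = (∫ ω, (∑ i, f i ω) ^ 2) - c ^ 2 := by
    have hrw : (fun ω => (∑ i, f i ω - c) ^ 2)
        = fun ω => ((∑ i, f i ω) ^ 2 - (2 * c) * (∑ i, f i ω)) + c ^ 2 := by
      funext ω; ring
    have hint1 : Integrable (fun ω => (∑ i : Fin n, f i ω) ^ 2 - (2 * c) * ∑ i : Fin n, f i ω) ℙ :=
      hSS.sub (hS1.const_mul (2 * c))
    have hint2 : Integrable (fun ω => (2 * c) * ∑ i : Fin n, f i ω) ℙ := hS1.const_mul (2 * c)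
    rw [hrw, integral_add hint1 (integrable_const _),
      integral_sub hSS hint2, MeasureTheory.integral_const_mul, integral_const]
    simp [← hc]
    ring
  have h2 : ∫ ω, (∑ i, f i ω) ^ 2 = ∑ i : Fin n, ∑ j : Fin n, ∫ ω, f i ω * f j ω := by
    have hrw : (fun ω => (∑ i, f i ω) ^ 2)
        = fun ω => ∑ i : Fin n, ∑ j : Fin n, f i ω * f j ω := by
      funext ω; rw [sq, Finset.sum_mul_sum]
    rw [hrw, integral_finset_sum _ (fun i _ => integrable_finset_sum _
      (fun j _ => aux_integrable_mul_L2 (hf i) (hf j)))]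
    exact Finset.sum_congr rfl fun i _ =>
      integral_finset_sum _ fun j _ => aux_integrable_mul_L2 (hf i) (hf j)
  have h3 : ∀ i : Fin n, (∑ j : Fin n, ∫ ω, f i ω * f j ω)
      = (∫ ω, f i ω ^ 2) + ∑ j ∈ Finset.univ.erase i, ∫ ω, f i ω * f j ω := by
    intro i
    rw [← Finset.add_sum_erase _ _ (Finset.mem_univ i)]
    congr 1
    simp [sq]
  rw [h1, h2]
  rw [Finset.sum_congr rfl fun i _ => h3 i, Finset.sum_add_distrib]
  ring

lemma aux_var_lower {n : ℕ} {K : ℝ} (f : Fin n → Ω → ℝ) (hf : ∀ i, MemLp (f i) 2 ℙ)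
    (hsq : ∀ i, ∫ ω, f i ω ^ 2 ≤ K) :
    -((n : ℝ) * K) ≤ (∑ i : Fin n, ∑ j ∈ Finset.univ.erase i, ∫ ω, f i ω * f j ω)
           - (∫ ω, ∑ i, f i ω) ^ 2 := by
  have hid := aux_var_identity f hf
  have hnn : 0 ≤ ∫ ω, (∑ i, f i ω - ∫ ω', ∑ i, f i ω') ^ 2 :=
    integral_nonneg fun ω => sq_nonneg _
  have hsum : (∑ i : Fin n, ∫ ω, f i ω ^ 2) ≤ (n : ℝ) * K := by
    calc (∑ i : Fin n, ∫ ω, f i ω ^ 2) ≤ ∑ _i : Fin n, K :=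
          Finset.sum_le_sum fun i _ => hsq i
      _ = (n : ℝ) * K := by simp [mul_comm]
  linarith

lemma aux_var_upper {n : ℕ} {K D' : ℝ} (f : Fin n → Ω → ℝ) (hf : ∀ i, MemLp (f i) 2 ℙ)
    (hsq : ∀ i, ∫ ω, f i ω ^ 2 ≤ K)
    (hD : (∑ i : Fin n, ∑ j ∈ Finset.univ.erase i, ∫ ω, f i ω * f j ω)
           - (∫ ω, ∑ i, f i ω) ^ 2 ≤ D') :
    ∫ ω, (∑ i, f i ω - ∫ ω', ∑ i, f i ω') ^ 2 ≤ (n : ℝ) * K + D' := by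
  have hid := aux_var_identity f hf
  have hsum : (∑ i : Fin n, ∫ ω, f i ω ^ 2) ≤ (n : ℝ) * K := by
    calc (∑ i : Fin n, ∫ ω, f i ω ^ 2) ≤ ∑ _i : Fin n, K :=
          Finset.sum_le_sum fun i _ => hsq i
      _ = (n : ℝ) * K := by simp [mul_comm]
  linarith

/-- Chebyshev/Markov wrapper: an eventual second-moment bound at rate `a n ^ 2`
gives stochastic boundedness at rate `a n`. -/
lemma aux_isBigOp_of_bound
    (ξ : ℕ → Ω → ℝ) (a : ℕ → ℝ) (B : ℝ)
    (h : ∀ᶠ n in atTop, 0 < a n ∧ ∃ g : Ω → ℝ,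
      Measurable g ∧ (∀ ω, (ξ n ω) ^ 2 ≤ g ω) ∧
      ∫⁻ ω, ENNReal.ofReal (g ω) ≤ ENNReal.ofReal (B * a n ^ 2)) :
    IsBigOp ξ a := by
  intro ε hε
  classical
  set C : ℝ := Real.sqrt (max B 0 / ε) + 1 with hC
  have hC0 : 0 < C := by positivity
  have hBC : B < ε * C ^ 2 := by
    have h1 : Real.sqrt (max B 0 / ε) ^ 2 = max B 0 / ε :=
      Real.sq_sqrt (by positivity)
    have h2 : Real.sqrt (max B 0 / ε) ^ 2 < C ^ 2 := by
      apply pow_lt_pow_left₀ (by simp [hC]) (Real.sqrt_nonneg _)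
      norm_num
    have h3 : max B 0 / ε < C ^ 2 := by rw [← h1]; exact h2
    have : max B 0 < ε * C ^ 2 := by
      rw [div_lt_iff₀ hε] at h3; linarith [h3]
    exact lt_of_le_of_lt (le_max_left _ _) this
  obtain ⟨N, hN⟩ := eventually_atTop.mp h
  refine ⟨C, hC0, N, fun n hn => ?_⟩
  obtain ⟨ha, g, hgm, hgle, hgint⟩ := hN n hn
  set t : ℝ := C * a n with ht
  have ht0 : 0 < t := mul_pos hC0 ha
  have hsub : {ω | t < |ξ n ω|} ⊆ {ω | ENNReal.ofReal (t ^ 2) ≤ ENNReal.ofReal (g ω)} := by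
    intro ω hω
    simp only [Set.mem_setOf_eq] at hω ⊢
    have h1 : t ^ 2 < ξ n ω ^ 2 := by
      calc t ^ 2 < |ξ n ω| ^ 2 := by
            apply pow_lt_pow_left₀ hω ht0.le
            norm_num
        _ = ξ n ω ^ 2 := sq_abs _
    exact ENNReal.ofReal_le_ofReal (le_trans h1.le (hgle ω))
  have hmarkov := mul_meas_ge_le_lintegral₀ (μ := (ℙ : Measure Ω))
    (hgm.ennreal_ofReal.aemeasurable) (ENNReal.ofReal (t ^ 2))
  have hchain : ENNReal.ofReal (t ^ 2) * ℙ {ω | t < |ξ n ω|}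
      < ENNReal.ofReal (t ^ 2) * ENNReal.ofReal ε := by
    calc ENNReal.ofReal (t ^ 2) * ℙ {ω | t < |ξ n ω|}
        ≤ ENNReal.ofReal (t ^ 2) * ℙ {ω | ENNReal.ofReal (t ^ 2) ≤ ENNReal.ofReal (g ω)} :=
          mul_le_mul_right (measure_mono hsub) _
      _ ≤ ∫⁻ ω, ENNReal.ofReal (g ω) := hmarkov
      _ ≤ ENNReal.ofReal (B * a n ^ 2) := hgint
      _ < ENNReal.ofReal (ε * t ^ 2) := by
          have hlt : B * a n ^ 2 < ε * t ^ 2 := by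
            have ha2 : 0 < a n ^ 2 := by positivity
            calc B * a n ^ 2 < (ε * C ^ 2) * a n ^ 2 := by nlinarith
              _ = ε * t ^ 2 := by rw [ht]; ring
          exact (ENNReal.ofReal_lt_ofReal_iff (by positivity)).mpr hlt
      _ = ENNReal.ofReal (t ^ 2) * ENNReal.ofReal ε := by
          rw [← ENNReal.ofReal_mul (by positivity)]
          ring_nf
  have h0 : ENNReal.ofReal (t ^ 2) ≠ 0 := by
    simp [ENNReal.ofReal_eq_zero, not_le]
    positivity
  by_contra hge; push_neg at hge; exact absurd hchain (not_lt.mpr (mul_le_mul_right hge _))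

/-- The central fourth-moment / covariance bound giving the second moment of the
Frobenius norm of the centered normalized Gram-type matrix. -/
lemma aux_key_bound {n : ℕ} {ι κ : Type*} [Fintype ι] [Fintype κ]
    (K D' : ℝ)
    (h : ι → κ → Fin n → Ω → ℝ)
    (h2 : ∀ l r i, MemLp (h l r i) 2 ℙ)
    (hsq : ∀ l r i, ∫ ω, (h l r i ω) ^ 2 ≤ K)
    (hD : ∀ l r, (∑ i : Fin n, ∑ j ∈ Finset.univ.erase i, ∫ ω, h l r i ω * h l r j ω)
      - (∫ ω, ∑ i, h l r i ω) ^ 2 ≤ D') :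
    ∫⁻ ω, ENNReal.ofReal (∑ l : ι, ∑ r : κ,
        ((n:ℝ)⁻¹ * (∑ i, h l r i ω) - ∫ ω', (n:ℝ)⁻¹ * ∑ i, h l r i ω') ^ 2)
      ≤ ENNReal.ofReal ((Fintype.card ι : ℝ) * (Fintype.card κ)
          * (((n:ℝ)⁻¹) ^ 2 * ((n : ℝ) * K + D'))) := by
  classical
  set E : ι → κ → Ω → ℝ := fun l r ω =>
    (n:ℝ)⁻¹ * (∑ i, h l r i ω) - ∫ ω', (n:ℝ)⁻¹ * ∑ i, h l r i ω' with hE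
  have hSmem : ∀ l r, MemLp (fun ω => ∑ i, h l r i ω) 2 ℙ := by
    intro l r
    have := memLp_finset_sum (μ := (ℙ : Measure Ω)) Finset.univ (fun i _ => h2 l r i)
    simpa using this
  have hEmem : ∀ l r, MemLp (E l r) 2 ℙ := fun l r =>
    ((hSmem l r).const_mul _).sub (memLp_const _)
  have hEint : ∀ l r, Integrable (fun ω => E l r ω ^ 2) ℙ := fun l r =>
    aux_integrable_sq_L2 (hEmem l r)
  have hEbound : ∀ l r, ∫ ω, E l r ω ^ 2 ≤ ((n:ℝ)⁻¹) ^ 2 * ((n : ℝ) * K + D') := by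
    intro l r
    have hcm : (∫ ω', (n:ℝ)⁻¹ * ∑ i, h l r i ω') = (n:ℝ)⁻¹ * ∫ ω', ∑ i, h l r i ω' :=
      integral_const_mul _ _
    have hre : (fun ω => E l r ω ^ 2)
        = fun ω => ((n:ℝ)⁻¹) ^ 2 * (∑ i, h l r i ω - ∫ ω', ∑ i, h l r i ω') ^ 2 := by
      funext ω
      rw [hE]
      simp only
      rw [hcm]
      ring
    rw [hre, integral_const_mul]
    exact mul_le_mul_of_nonneg_left (aux_var_upper _ (h2 l r) (hsq l r) (hD l r)) (by positivity)
  have hsumint : Integrable (fun ω => ∑ l : ι, ∑ r : κ, E l r ω ^ 2) ℙ :=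
    integrable_finset_sum _ fun l _ => integrable_finset_sum _ fun r _ => hEint l r
  have hnn : 0 ≤ᵐ[ℙ] fun ω => ∑ l : ι, ∑ r : κ, E l r ω ^ 2 :=
    Filter.Eventually.of_forall fun ω =>
      Finset.sum_nonneg fun l _ => Finset.sum_nonneg fun r _ => sq_nonneg _
  have heq : ∫⁻ ω, ENNReal.ofReal (∑ l : ι, ∑ r : κ, E l r ω ^ 2)
      = ENNReal.ofReal (∫ ω, ∑ l : ι, ∑ r : κ, E l r ω ^ 2) :=
    (ofReal_integral_eq_lintegral_ofReal hsumint hnn).symm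
  rw [heq]
  apply ENNReal.ofReal_le_ofReal
  rw [integral_finset_sum _ fun l _ => integrable_finset_sum _ fun r _ => hEint l r]
  calc ∑ l : ι, ∫ ω, ∑ r : κ, E l r ω ^ 2
      = ∑ l : ι, ∑ r : κ, ∫ ω, E l r ω ^ 2 :=
        Finset.sum_congr rfl fun l _ => integral_finset_sum _ fun r _ => hEint l r
    _ ≤ ∑ _l : ι, ∑ _r : κ, ((n:ℝ)⁻¹) ^ 2 * ((n : ℝ) * K + D') :=
        Finset.sum_le_sum fun l _ => Finset.sum_le_sum fun r _ => hEbound l r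
    _ = (Fintype.card ι : ℝ) * (Fintype.card κ) * (((n:ℝ)⁻¹) ^ 2 * ((n : ℝ) * K + D')) := by
        simp [Finset.sum_const, Finset.card_univ, mul_assoc]

/-- Extract a per-index upper bound from a bound on the sum of two double sups,
using a uniform lower bound on the second family. -/
lemma aux_sup_extract {ι κ ι' κ' : Type*} [Fintype ι] [Fintype κ] [Fintype ι'] [Fintype κ']
    [Nonempty ι'] [Nonempty κ']
    (f : ι → κ → ℝ) (g : ι' → κ' → ℝ) (Cn nK : ℝ)
    (hsum : (⨆ l, ⨆ r, f l r) + (⨆ l, ⨆ r, g l r) ≤ Cn)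
    (hglow : ∀ l r, -nK ≤ g l r) :
    ∀ l r, f l r ≤ Cn + nK := by
  intro l r
  have hf1 : f l r ≤ ⨆ r', f l r' :=
    le_ciSup (Set.Finite.bddAbove (Set.finite_range _)) r
  have hf2 : (⨆ r', f l r') ≤ ⨆ l', ⨆ r', f l' r' :=
    le_ciSup (f := fun l' => ⨆ r', f l' r') (Set.Finite.bddAbove (Set.finite_range _)) l
  obtain ⟨l₀⟩ := (inferInstance : Nonempty ι')
  obtain ⟨r₀⟩ := (inferInstance : Nonempty κ')
  have hg1 : g l₀ r₀ ≤ ⨆ r', g l₀ r' :=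
    le_ciSup (Set.Finite.bddAbove (Set.finite_range _)) r₀
  have hg2 : (⨆ r', g l₀ r') ≤ ⨆ l', ⨆ r', g l' r' :=
    le_ciSup (f := fun l' => ⨆ r', g l' r') (Set.Finite.bddAbove (Set.finite_range _)) l₀
  have hglow' : -nK ≤ ⨆ l', ⨆ r', g l' r' := le_trans (hglow l₀ r₀) (le_trans hg1 hg2)
  have := hsum
  linarith [le_trans hf1 hf2]

/-- One generic half of Lemma 1. -/
lemma aux_isBigOp_part
    (K : ℝ) (hK : 0 < K) (p : ℕ → ℕ) (hp1 : ∀ᶠ n in atTop, 1 ≤ p n)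
    {ιn κn : ℕ → ℕ}
    (V : (n : ℕ) → Ω → Matrix (Fin n) (Fin (ιn n)) ℝ)
    (W : (n : ℕ) → Ω → Matrix (Fin n) (Fin (κn n)) ℝ)
    (hVmeas : ∀ n i l, Measurable fun ω => V n ω i l)
    (hWmeas : ∀ n i r, Measurable fun ω => W n ω i r)
    (hV4 : ∀ n i l, (∫ ω, (V n ω i l) ^ 4) ≤ K ∧ MemLp (fun ω => V n ω i l) 4 ℙ)
    (hW4 : ∀ n i r, (∫ ω, (W n ω i r) ^ 4) ≤ K ∧ MemLp (fun ω => W n ω i r) 4 ℙ)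
    (Bc C₀ : ℝ) (hBc : 0 ≤ Bc) (hC₀ : 0 ≤ C₀)
    (hcard : ∀ᶠ n in atTop, ((ιn n : ℝ) * (κn n)) ≤ Bc * (p n : ℝ) ^ 2)
    (hD : ∀ᶠ n in atTop, ∀ (l : Fin (ιn n)) (r : Fin (κn n)),
       (∑ i : Fin n, ∑ j ∈ Finset.univ.erase i,
          ∫ ω, V n ω i l * W n ω i r * V n ω j l * W n ω j r)
         - (∫ ω, ∑ i : Fin n, V n ω i l * W n ω i r) ^ 2 ≤ C₀ * n) :
    IsBigOp (fun n ω => specNorm ((n:ℝ)⁻¹ • ((V n ω)ᵀ * W n ω)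
        - expMat (fun ω' => (n:ℝ)⁻¹ • ((V n ω')ᵀ * W n ω'))))
      (fun n => (p n : ℝ) / Real.sqrt n) := by
  classical
  apply aux_isBigOp_of_bound _ _ (Bc * (K + C₀))
  filter_upwards [hp1, hcard, hD, eventually_ge_atTop 1] with n hp1n hcardn hDn hn1
  have hn0 : (0:ℝ) < n := by exact_mod_cast hn1
  constructor
  · exact div_pos (by exact_mod_cast hp1n) (Real.sqrt_pos.mpr hn0)
  set h : Fin (ιn n) → Fin (κn n) → Fin n → Ω → ℝ :=
    fun l r i ω => V n ω i l * W n ω i r with hh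
  set E : Fin (ιn n) → Fin (κn n) → Ω → ℝ := fun l r ω =>
    (n:ℝ)⁻¹ * (∑ i, h l r i ω) - ∫ ω', (n:ℝ)⁻¹ * ∑ i, h l r i ω' with hE
  refine ⟨fun ω => ∑ l : Fin (ιn n), ∑ r : Fin (κn n), E l r ω ^ 2, ?_, ?_, ?_⟩
  · apply Finset.measurable_sum
    intro l _
    apply Finset.measurable_sum
    intro r _
    have hme : Measurable (E l r) := by
      apply Measurable.sub
      · exact (Finset.measurable_sum _ fun i _ =>
          ((hVmeas n i l).mul (hWmeas n i r))).const_mul _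
      · exact measurable_const
    exact hme.pow_const 2
  · intro ω
    have hentry : ∀ (l : Fin (ιn n)) (r : Fin (κn n)),
        ((n:ℝ)⁻¹ • ((V n ω)ᵀ * W n ω)
          - expMat (fun ω' => (n:ℝ)⁻¹ • ((V n ω')ᵀ * W n ω'))) l r = E l r ω := by
      intro l r
      have hF : ∀ ω', ((n:ℝ)⁻¹ • ((V n ω')ᵀ * W n ω')) l r
          = (n:ℝ)⁻¹ * ∑ i, V n ω' i l * W n ω' i r := by
        intro ω'
        simp [Matrix.smul_apply, Matrix.mul_apply, Matrix.transpose_apply, smul_eq_mul]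
      simp only [Matrix.sub_apply, expMat, Matrix.of_apply, hF, hE, hh]
    calc specNorm ((n:ℝ)⁻¹ • ((V n ω)ᵀ * W n ω)
          - expMat (fun ω' => (n:ℝ)⁻¹ • ((V n ω')ᵀ * W n ω'))) ^ 2
        ≤ ∑ l : Fin (ιn n), ∑ r : Fin (κn n),
            (((n:ℝ)⁻¹ • ((V n ω)ᵀ * W n ω)
              - expMat (fun ω' => (n:ℝ)⁻¹ • ((V n ω')ᵀ * W n ω'))) l r) ^ 2 :=
          aux_specNorm_sq_le _
      _ = ∑ l : Fin (ιn n), ∑ r : Fin (κn n), E l r ω ^ 2 :=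
          Finset.sum_congr rfl fun l _ => Finset.sum_congr rfl fun r _ => by
            rw [hentry l r]
  · have h2 : ∀ l r i, MemLp (h l r i) 2 ℙ := fun l r i =>
      aux_memLp_two_mul (hV4 n i l).2 (hW4 n i r).2
    have hsq : ∀ l r i, ∫ ω, (h l r i ω) ^ 2 ≤ K := fun l r i =>
      aux_sq_moment_le hK (hV4 n i l).2 (hW4 n i r).2 (hV4 n i l).1 (hW4 n i r).1
    have hD' : ∀ l r, (∑ i : Fin n, ∑ j ∈ Finset.univ.erase i,
        ∫ ω, h l r i ω * h l r j ω) - (∫ ω, ∑ i, h l r i ω) ^ 2 ≤ C₀ * n := by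
      intro l r
      have := hDn l r
      simp only [hh, mul_assoc] at this ⊢
      exact this
    have hkey := aux_key_bound (K := K) (D' := C₀ * n) h h2 hsq hD'
    refine hkey.trans (ENNReal.ofReal_le_ofReal ?_)
    have hcards : ((Fintype.card (Fin (ιn n)) : ℝ) * (Fintype.card (Fin (κn n))))
        = ((ιn n : ℝ) * (κn n)) := by simp
    rw [hcards]
    have hmid : ((n:ℝ)⁻¹) ^ 2 * ((n : ℝ) * K + C₀ * n) = (K + C₀) / n := by
      field_simp
    rw [hmid]
    have hKC : 0 ≤ (K + C₀) / (n:ℝ) := by positivity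
    have hsq' : ((p n : ℝ) / Real.sqrt n) ^ 2 = (p n : ℝ) ^ 2 / n := by
      rw [div_pow, Real.sq_sqrt hn0.le]
    rw [hsq']
    calc ((ιn n : ℝ) * (κn n)) * ((K + C₀) / n)
        ≤ (Bc * (p n : ℝ) ^ 2) * ((K + C₀) / n) :=
          mul_le_mul_of_nonneg_right hcardn hKC
      _ = Bc * (K + C₀) * ((p n : ℝ) ^ 2 / n) := by ring

end Aux

/-- **Lemma 1 of the paper.** With `M̂ = ZᵀZ/n`, `M = E M̂`,
`Ĵ = ZᵀU/n`, `J = E Ĵ`, fourth moments bounded by `K`, `m ≥ p+k+1`, `m ∼ p`,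
`Δ_{ZᵀZ} + Δ_{ZᵀU} = O(n)` and `p²/n → 0`, one has
`‖M̂ − M‖ = O_p(p/√n)` and `‖Ĵ − J‖ = O_p(p/√n)` in spectral norm. -/
theorem lemma1_Mhat_Jhat_rates
    {Ω : Type*} [MeasureSpace Ω] [IsProbabilityMeasure (ℙ : Measure Ω)]
    (k : ℕ) (K : ℝ) (hK : 0 < K)
    (p m : ℕ → ℕ)
    (hp : Tendsto p atTop atTop)
    (hmp : ∀ n, p n + k + 1 ≤ m n)
    (hmsimp : ∃ c₁ c₂ : ℝ, 0 < c₁ ∧ 0 < c₂ ∧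
      ∀ n, c₁ * (p n : ℝ) ≤ (m n : ℝ) ∧ (m n : ℝ) ≤ c₂ * (p n : ℝ))
    (Z : (n : ℕ) → Ω → Matrix (Fin n) (Fin (m n)) ℝ)
    (U : (n : ℕ) → Ω → Matrix (Fin n) (Fin (p n + k + 1)) ℝ)
    (hZmeas : ∀ n i l, Measurable fun ω => Z n ω i l)
    (hUmeas : ∀ n i r, Measurable fun ω => U n ω i r)
    (hZ4 : ∀ n i l, (∫ ω, (Z n ω i l) ^ 4) ≤ K ∧ MemLp (fun ω => Z n ω i l) 4 ℙ)
    (hU4 : ∀ n i r, (∫ ω, (U n ω i r) ^ 4) ≤ K ∧ MemLp (fun ω => U n ω i r) 4 ℙ)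
    (hΔ : ∃ C : ℝ, ∀ᶠ n in atTop,
      ((⨆ l : Fin (m n), ⨆ k' : Fin (m n),
          ((∑ i : Fin n, ∑ j ∈ Finset.univ.erase i,
              ∫ ω, Z n ω i l * Z n ω i k' * Z n ω j l * Z n ω j k')
            - (∫ ω, ∑ i : Fin n, Z n ω i l * Z n ω i k') ^ 2))
        + (⨆ l : Fin (m n), ⨆ r : Fin (p n + k + 1),
          ((∑ i : Fin n, ∑ j ∈ Finset.univ.erase i,
              ∫ ω, Z n ω i l * U n ω i r * Z n ω j l * U n ω j r)
            - (∫ ω, ∑ i : Fin n, Z n ω i l * U n ω i r) ^ 2)))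
        ≤ C * (n : ℝ))
    (hp2n : Tendsto (fun n => ((p n : ℝ)) ^ 2 / (n : ℝ)) atTop (nhds 0)) :
    IsBigOp (fun n ω =>
        specNorm ((n : ℝ)⁻¹ • ((Z n ω)ᵀ * Z n ω)
          - expMat (fun ω' => (n : ℝ)⁻¹ • ((Z n ω')ᵀ * Z n ω'))))
      (fun n => (p n : ℝ) / Real.sqrt n) ∧
    IsBigOp (fun n ω =>
        specNorm ((n : ℝ)⁻¹ • ((Z n ω)ᵀ * U n ω)
          - expMat (fun ω' => (n : ℝ)⁻¹ • ((Z n ω')ᵀ * U n ω'))))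
      (fun n => (p n : ℝ) / Real.sqrt n) := by
  classical
  obtain ⟨c₁, c₂, hc₁, hc₂, hc⟩ := hmsimp
  obtain ⟨C, hC⟩ := hΔ
  have hp1 : ∀ᶠ n in atTop, 1 ≤ p n := hp.eventually_ge_atTop 1
  set C₀ : ℝ := max (C + K) 0 with hC₀def
  have hC₀ : 0 ≤ C₀ := le_max_right _ _
  -- nonemptiness of index types
  have hmpos : ∀ n, 0 < m n := fun n => lt_of_lt_of_le (Nat.succ_pos _) (hmp n)
  -- lower bounds for the Δ-terms
  have hlowZZ : ∀ n (l k' : Fin (m n)),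
      -((n : ℝ) * K) ≤ (∑ i : Fin n, ∑ j ∈ Finset.univ.erase i,
          ∫ ω, Z n ω i l * Z n ω i k' * Z n ω j l * Z n ω j k')
        - (∫ ω, ∑ i : Fin n, Z n ω i l * Z n ω i k') ^ 2 := by
    intro n l k'
    have := aux_var_lower (K := K) (fun i ω => Z n ω i l * Z n ω i k')
      (fun i => aux_memLp_two_mul (hZ4 n i l).2 (hZ4 n i k').2)
      (fun i => aux_sq_moment_le hK (hZ4 n i l).2 (hZ4 n i k').2 (hZ4 n i l).1 (hZ4 n i k').1)
    simp only [mul_assoc] at this ⊢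
    exact this
  have hlowZU : ∀ n (l : Fin (m n)) (r : Fin (p n + k + 1)),
      -((n : ℝ) * K) ≤ (∑ i : Fin n, ∑ j ∈ Finset.univ.erase i,
          ∫ ω, Z n ω i l * U n ω i r * Z n ω j l * U n ω j r)
        - (∫ ω, ∑ i : Fin n, Z n ω i l * U n ω i r) ^ 2 := by
    intro n l r
    have := aux_var_lower (K := K) (fun i ω => Z n ω i l * U n ω i r)
      (fun i => aux_memLp_two_mul (hZ4 n i l).2 (hU4 n i r).2)
      (fun i => aux_sq_moment_le hK (hZ4 n i l).2 (hU4 n i r).2 (hZ4 n i l).1 (hU4 n i r).1)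
    simp only [mul_assoc] at this ⊢
    exact this
  -- per-index Δ upper bounds
  have hDZZ : ∀ᶠ n in atTop, ∀ (l k' : Fin (m n)),
      (∑ i : Fin n, ∑ j ∈ Finset.univ.erase i,
          ∫ ω, Z n ω i l * Z n ω i k' * Z n ω j l * Z n ω j k')
        - (∫ ω, ∑ i : Fin n, Z n ω i l * Z n ω i k') ^ 2 ≤ C₀ * n := by
    filter_upwards [hC] with n hn
    haveI : Nonempty (Fin (m n)) := ⟨⟨0, hmpos n⟩⟩
    have hext := aux_sup_extract
      (f := fun (l : Fin (m n)) (k' : Fin (m n)) =>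
        (∑ i : Fin n, ∑ j ∈ Finset.univ.erase i,
          ∫ ω, Z n ω i l * Z n ω i k' * Z n ω j l * Z n ω j k')
        - (∫ ω, ∑ i : Fin n, Z n ω i l * Z n ω i k') ^ 2)
      (g := fun (l : Fin (m n)) (r : Fin (p n + k + 1)) =>
        (∑ i : Fin n, ∑ j ∈ Finset.univ.erase i,
          ∫ ω, Z n ω i l * U n ω i r * Z n ω j l * U n ω j r)
        - (∫ ω, ∑ i : Fin n, Z n ω i l * U n ω i r) ^ 2)
      (C * n) ((n : ℝ) * K) hn (hlowZU n)
    have hle : C * (n : ℝ) + (n : ℝ) * K ≤ C₀ * n := by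
      have : (C + K) ≤ C₀ := le_max_left _ _
      nlinarith [Nat.cast_nonneg (α := ℝ) n]
    exact fun l k' => le_trans (hext l k') hle
  have hDZU : ∀ᶠ n in atTop, ∀ (l : Fin (m n)) (r : Fin (p n + k + 1)),
      (∑ i : Fin n, ∑ j ∈ Finset.univ.erase i,
          ∫ ω, Z n ω i l * U n ω i r * Z n ω j l * U n ω j r)
        - (∫ ω, ∑ i : Fin n, Z n ω i l * U n ω i r) ^ 2 ≤ C₀ * n := by
    filter_upwards [hC] with n hn
    haveI : Nonempty (Fin (m n)) := ⟨⟨0, hmpos n⟩⟩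
    have hn' : (⨆ l : Fin (m n), ⨆ r : Fin (p n + k + 1),
          ((∑ i : Fin n, ∑ j ∈ Finset.univ.erase i,
              ∫ ω, Z n ω i l * U n ω i r * Z n ω j l * U n ω j r)
            - (∫ ω, ∑ i : Fin n, Z n ω i l * U n ω i r) ^ 2))
        + (⨆ l : Fin (m n), ⨆ k' : Fin (m n),
          ((∑ i : Fin n, ∑ j ∈ Finset.univ.erase i,
              ∫ ω, Z n ω i l * Z n ω i k' * Z n ω j l * Z n ω j k')
            - (∫ ω, ∑ i : Fin n, Z n ω i l * Z n ω i k') ^ 2)) ≤ C * n := by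
      linarith [hn]
    have hext := aux_sup_extract
      (f := fun (l : Fin (m n)) (r : Fin (p n + k + 1)) =>
        (∑ i : Fin n, ∑ j ∈ Finset.univ.erase i,
          ∫ ω, Z n ω i l * U n ω i r * Z n ω j l * U n ω j r)
        - (∫ ω, ∑ i : Fin n, Z n ω i l * U n ω i r) ^ 2)
      (g := fun (l : Fin (m n)) (k' : Fin (m n)) =>
        (∑ i : Fin n, ∑ j ∈ Finset.univ.erase i,
          ∫ ω, Z n ω i l * Z n ω i k' * Z n ω j l * Z n ω j k')
        - (∫ ω, ∑ i : Fin n, Z n ω i l * Z n ω i k') ^ 2)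
      (C * n) ((n : ℝ) * K) hn' (hlowZZ n)
    have hle : C * (n : ℝ) + (n : ℝ) * K ≤ C₀ * n := by
      have : (C + K) ≤ C₀ := le_max_left _ _
      nlinarith [Nat.cast_nonneg (α := ℝ) n]
    exact fun l r => le_trans (hext l r) hle
  -- cardinality bounds
  have hcardZZ : ∀ᶠ n in atTop, ((m n : ℝ) * (m n)) ≤ c₂ ^ 2 * (p n : ℝ) ^ 2 := by
    apply Eventually.of_forall
    intro n
    have h1 := (hc n).2
    have h2 : (0:ℝ) ≤ (m n : ℝ) := Nat.cast_nonneg _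
    nlinarith
  have hcardZU : ∀ᶠ n in atTop,
      ((m n : ℝ) * ((p n + k + 1 : ℕ) : ℝ)) ≤ c₂ ^ 2 * (p n : ℝ) ^ 2 := by
    apply Eventually.of_forall
    intro n
    have h1 := (hc n).2
    have h2 : (0:ℝ) ≤ (m n : ℝ) := Nat.cast_nonneg _
    have h3 : ((p n + k + 1 : ℕ) : ℝ) ≤ (m n : ℝ) := by exact_mod_cast hmp n
    have h4 : (0:ℝ) ≤ ((p n + k + 1 : ℕ) : ℝ) := Nat.cast_nonneg _
    nlinarith
  constructor
  · exact aux_isBigOp_part K hK p hp1 Z Z hZmeas hZmeas hZ4 hZ4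
      (c₂ ^ 2) C₀ (by positivity) hC₀ hcardZZ hDZZ
  · exact aux_isBigOp_part K hK p hp1 Z U hZmeas hUmeas hZ4 hU4
      (c₂ ^ 2) C₀ (by positivity) hC₀ hcardZU hDZU

end
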